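/- Let u, v : Ω → ℝ be smooth, let α ∈ ℝ, and suppose v₁ vanishes nowhere on Ω. If u₃·v₁ − u₁·v₃ = (v₂ − α·v₃)·v₁ and u₄·v₁ − u₁·v₄ = (v₃ − α·v₄)·v₁ hold identically on Ω, then ∂₂(v₄/v₁) − α·∂₃(v₄/v₁) = ∂₃(v₃/v₁) − α·∂₄(v₃/v₁) on Ω. -/

import Mathlib

/-!
Write `a = u₁ / v₁` (coordinates `x¹, …, x⁴` carry the indices `0, …, 3` in the code).
Then the system says `u₁ = a v₁`, `u₃ = v₂ + (a − α) v₃` and `u₄ = v₃ + (a − α) v₄`, so the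
integrability conditions `∂₄u₃ = ∂₃u₄`, `∂₁u₃ = ∂₃u₁`, `∂₁u₄ = ∂₄u₁` are three equations linear
in `a₁, a₃, a₄` (the term `(a − α) v₃₄` cancels from the first). Eliminating these gives
`v₁ (v₂₄ − v₃₃) = v₄ (v₁₂ − α v₁₃) − v₃ (v₁₃ − α v₁₄)`, which is `v₁²` times the claimed identity.
-/

/-- Partial derivative of `F : ℝ⁴ → ℝ` in the `i`-th coordinate direction. -/
noncomputable def pd (i : Fin 4) (F : (Fin 4 → ℝ) → ℝ) : (Fin 4 → ℝ) → ℝ :=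
  fun x => fderiv ℝ F x (Pi.single i 1)

section PartialDerivative

variable {f g : (Fin 4 → ℝ) → ℝ} {x : Fin 4 → ℝ}

theorem differentiableAt_fderiv_of_contDiffAt_two (hf : ContDiffAt ℝ 2 f x) :
    DifferentiableAt ℝ (fderiv ℝ f) x :=
  (hf.fderiv_right (m := 1) (by norm_num)).differentiableAt (by norm_num)

theorem differentiableAt_pd (hf : ContDiffAt ℝ 2 f x) (j : Fin 4) :
    DifferentiableAt ℝ (pd j f) x :=
  (differentiableAt_fderiv_of_contDiffAt_two hf).clm_apply (differentiableAt_const _)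

theorem pd_pd_eq_fderiv_fderiv (hf : ContDiffAt ℝ 2 f x) (i j : Fin 4) :
    pd i (pd j f) x = fderiv ℝ (fderiv ℝ f) x (Pi.single i 1) (Pi.single j 1) := by
  change fderiv ℝ (fun y => fderiv ℝ f y (Pi.single j 1)) x (Pi.single i 1) = _
  rw [fderiv_clm_apply (differentiableAt_fderiv_of_contDiffAt_two hf) (differentiableAt_const _)]
  simp

theorem pd_pd_comm (hf : ContDiffAt ℝ 2 f x) (i j : Fin 4) :
    pd i (pd j f) x = pd j (pd i f) x := by
  rw [pd_pd_eq_fderiv_fderiv hf, pd_pd_eq_fderiv_fderiv hf]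
  exact hf.isSymmSndFDerivAt (by simp [minSmoothness_of_isRCLikeNormedField]) _ _

theorem pd_add (hf : DifferentiableAt ℝ f x) (hg : DifferentiableAt ℝ g x) (i : Fin 4) :
    pd i (fun y => f y + g y) x = pd i f x + pd i g x := by
  simp only [pd, fderiv_fun_add hf hg, add_apply]

theorem pd_sub_const (c : ℝ) (i : Fin 4) : pd i (fun y => f y - c) x = pd i f x := by
  simp only [pd, fderiv_sub_const]

theorem pd_mul (hf : DifferentiableAt ℝ f x) (hg : DifferentiableAt ℝ g x) (i : Fin 4) :
    pd i (fun y => f y * g y) x = pd i f x * g x + f x * pd i g x := by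
  simp only [pd, fderiv_fun_mul hf hg, add_apply, smul_apply, smul_eq_mul]
  ring

theorem pd_inv (hg : DifferentiableAt ℝ g x) (hgx : g x ≠ 0) (i : Fin 4) :
    pd i (fun y => (g y)⁻¹) x = -pd i g x / g x ^ 2 := by
  have h := ((hasDerivAt_inv hgx).comp_hasFDerivAt x hg.hasFDerivAt).fderiv
  rw [Function.comp_def] at h
  simp only [pd, h, smul_apply, smul_eq_mul]
  ring

theorem pd_div (hf : DifferentiableAt ℝ f x) (hg : DifferentiableAt ℝ g x) (hgx : g x ≠ 0)
    (i : Fin 4) :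
    pd i (fun y => f y / g y) x = (pd i f x * g x - f x * pd i g x) / g x ^ 2 := by
  simp only [div_eq_mul_inv]
  rw [pd_mul hf (hg.fun_inv hgx), pd_inv hg hgx]
  field_simp
  ring

theorem pd_congr_of_eqOn {Ω : Set (Fin 4 → ℝ)} (hΩ : IsOpen Ω) (hx : x ∈ Ω) (h : Set.EqOn f g Ω)
    (i : Fin 4) : pd i f x = pd i g x := by
  simp only [pd, (Filter.eventuallyEq_of_mem (hΩ.mem_nhds hx) h).fderiv_eq]

end PartialDerivative

theorem eqOn_pd_of_mul_sub_mul_eq {Ω : Set (Fin 4 → ℝ)} {u v : (Fin 4 → ℝ) → ℝ} {α : ℝ}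
    {j k : Fin 4} (hv1 : ∀ x ∈ Ω, pd 0 v x ≠ 0)
    (h : ∀ x ∈ Ω,
      pd k u x * pd 0 v x - pd 0 u x * pd k v x = (pd j v x - α * pd k v x) * pd 0 v x) :
    Set.EqOn (pd k u) (fun y => pd j v y + (pd 0 u y / pd 0 v y - α) * pd k v y) Ω := by
  intro y hy
  field_simp [hv1 y hy]
  linear_combination h y hy

theorem segre_elimination {Ω : Set (Fin 4 → ℝ)} (hΩ : IsOpen Ω) {x : Fin 4 → ℝ} (hx : x ∈ Ω)
    {u v a : (Fin 4 → ℝ) → ℝ} {α : ℝ} (huC2 : ContDiffAt ℝ 2 u x) (hvC2 : ContDiffAt ℝ 2 v x)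
    (ha : DifferentiableAt ℝ a x)
    (hu0 : Set.EqOn (pd 0 u) (fun y => a y * pd 0 v y) Ω)
    (hu2 : Set.EqOn (pd 2 u) (fun y => pd 1 v y + (a y - α) * pd 2 v y) Ω)
    (hu3 : Set.EqOn (pd 3 u) (fun y => pd 2 v y + (a y - α) * pd 3 v y) Ω) :
    pd 0 v x * (pd 1 (pd 3 v) x - pd 2 (pd 2 v) x)
      = pd 3 v x * (pd 1 (pd 0 v) x - α * pd 2 (pd 0 v) x)
        - pd 2 v x * (pd 2 (pd 0 v) x - α * pd 3 (pd 0 v) x) := by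
  have hdv := differentiableAt_pd hvC2
  have h32 := pd_pd_comm huC2 3 2
  have h02 := pd_pd_comm huC2 0 2
  have h03 := pd_pd_comm huC2 0 3
  rw [pd_congr_of_eqOn hΩ hx hu2, pd_congr_of_eqOn hΩ hx hu3] at h32
  rw [pd_congr_of_eqOn hΩ hx hu2, pd_congr_of_eqOn hΩ hx hu0] at h02
  rw [pd_congr_of_eqOn hΩ hx hu3, pd_congr_of_eqOn hΩ hx hu0] at h03
  simp (disch := fun_prop) only [pd_add, pd_mul, pd_sub_const] at h32 h02 h03
  simp only [pd_pd_comm hvC2 3 1, pd_pd_comm hvC2 2 3, pd_pd_comm hvC2 0 1, pd_pd_comm hvC2 0 2,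
    pd_pd_comm hvC2 0 3] at h32 h02 h03
  linear_combination pd 0 v x * h32 - pd 3 v x * h02 + pd 2 v x * h03

/-- Elimination of `u` from the Segre type [21] system `u₃v₁ − u₁v₃ = (v₂ − αv₃)v₁`,
`u₄v₁ − u₁v₄ = (v₃ − αv₄)v₁` yields `(∂₂ − α∂₃)(v₄/v₁) = (∂₃ − α∂₄)(v₃/v₁)`.
Coordinates `x¹,…,x⁴` are indexed by `0,…,3`. -/
theorem statement10 (Ω : Set (Fin 4 → ℝ)) (hΩ : IsOpen Ω)
    (u v : (Fin 4 → ℝ) → ℝ)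
    (hu : ContDiffOn ℝ (⊤ : ℕ∞) u Ω) (hv : ContDiffOn ℝ (⊤ : ℕ∞) v Ω)
    (α : ℝ)
    (hv1 : ∀ x ∈ Ω, pd 0 v x ≠ 0)
    (heq1 : ∀ x ∈ Ω,
      pd 2 u x * pd 0 v x - pd 0 u x * pd 2 v x = (pd 1 v x - α * pd 2 v x) * pd 0 v x)
    (heq2 : ∀ x ∈ Ω,
      pd 3 u x * pd 0 v x - pd 0 u x * pd 3 v x = (pd 2 v x - α * pd 3 v x) * pd 0 v x) :
    ∀ x ∈ Ω,
      pd 1 (fun y => pd 3 v y / pd 0 v y) x - α * pd 2 (fun y => pd 3 v y / pd 0 v y) x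
        = pd 2 (fun y => pd 2 v y / pd 0 v y) x
          - α * pd 3 (fun y => pd 2 v y / pd 0 v y) x := by
  intro x hx
  have huC2 : ContDiffAt ℝ 2 u x := (hu.contDiffAt (hΩ.mem_nhds hx)).of_le (by norm_cast)
  have hvC2 : ContDiffAt ℝ 2 v x := (hv.contDiffAt (hΩ.mem_nhds hx)).of_le (by norm_cast)
  have hdv := differentiableAt_pd hvC2
  have hda : DifferentiableAt ℝ (fun y => pd 0 u y / pd 0 v y) x := by
    have := differentiableAt_pd huC2 0
    have := hv1 x hx
    fun_prop (disch := assumption)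
  have key := segre_elimination hΩ hx huC2 hvC2 hda
    (fun y hy => (div_mul_cancel₀ _ (hv1 y hy)).symm)
    (eqOn_pd_of_mul_sub_mul_eq hv1 heq1) (eqOn_pd_of_mul_sub_mul_eq hv1 heq2)
  rw [pd_div (hdv 3) (hdv 0) (hv1 x hx), pd_div (hdv 3) (hdv 0) (hv1 x hx),
    pd_div (hdv 2) (hdv 0) (hv1 x hx), pd_div (hdv 2) (hdv 0) (hv1 x hx), pd_pd_comm hvC2 2 3]
  linear_combination key / pd 0 v x ^ 2
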